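/- arXiv:2011.12704 — 5 statements merged into one kernel-verified Lean document; each statement's English description precedes it below -/
import Mathlib

section
/- Suppose probability distributions P_X and P_{X'} on a finite set satisfy ‖P_X − P_{X'}‖₁ ≤ ε, and an event E satisfies P_X(E) ≥ α with α > ε. Then the conditional distributions satisfy ‖P_{X|E} − P_{X'|E}‖₁ ≤ 2ε/α. -/
/-- If `‖P − Q‖₁ ≤ ε` and `P(E) ≥ α > ε`, then the conditional
distributions satisfy `‖P_{|E} − Q_{|E}‖₁ ≤ 2ε/α`, where
`P_{|E}(x) = P(x)·1[x∈E]/P(E)`. -/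
theorem conditional_l1_bound {X : Type*} [Fintype X] [DecidableEq X]
    (P Q : X → ℝ) (E : Finset X) (ε α : ℝ)
    (hP0 : ∀ x, 0 ≤ P x) (hP1 : ∑ x, P x = 1)
    (hQ0 : ∀ x, 0 ≤ Q x) (hQ1 : ∑ x, Q x = 1)
    (hl1 : ∑ x, |P x - Q x| ≤ ε)
    (hPE : α ≤ ∑ x ∈ E, P x)
    (hεα : ε < α) :
    ∑ x, |(if x ∈ E then P x else 0) / (∑ y ∈ E, P y)
          - (if x ∈ E then Q x else 0) / (∑ y ∈ E, Q y)| ≤ 2 * ε / α := by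
  set PE := ∑ y ∈ E, P y with hPEdef
  set QE := ∑ y ∈ E, Q y with hQEdef
  have hε0 : 0 ≤ ε := le_trans (Finset.sum_nonneg fun x _ => abs_nonneg _) hl1
  have hα0 : 0 < α := lt_of_le_of_lt hε0 hεα
  have hPEpos : 0 < PE := lt_of_lt_of_le hα0 hPE
  have hεE : ∑ x ∈ E, |P x - Q x| ≤ ε :=
    le_trans (Finset.sum_le_sum_of_subset_of_nonneg (Finset.subset_univ E)
      (fun x _ _ => abs_nonneg _)) hl1
  have hdiff : |PE - QE| ≤ ∑ x ∈ E, |P x - Q x| := by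
    rw [hPEdef, hQEdef, ← Finset.sum_sub_distrib]
    exact Finset.abs_sum_le_sum_abs _ _
  have hdiff' : |PE - QE| ≤ ε := le_trans hdiff hεE
  have hQEpos : 0 < QE := by
    have : PE - QE ≤ ε := le_trans (le_abs_self _) hdiff'
    linarith
  have hrw : ∀ x, |(if x ∈ E then P x else 0) / PE - (if x ∈ E then Q x else 0) / QE|
      = if x ∈ E then |P x / PE - Q x / QE| else 0 := by
    intro x; by_cases h : x ∈ E <;> simp [h]
  calc ∑ x, |(if x ∈ E then P x else 0) / PE - (if x ∈ E then Q x else 0) / QE|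
      = ∑ x ∈ E, |P x / PE - Q x / QE| := by
        simp_rw [hrw]; rw [Finset.sum_ite_mem, Finset.univ_inter]
    _ ≤ ∑ x ∈ E, (|P x - Q x| / PE + Q x * (|QE - PE| / (PE * QE))) := by
        apply Finset.sum_le_sum
        intro x _
        have hne : PE ≠ 0 := ne_of_gt hPEpos
        have hne' : QE ≠ 0 := ne_of_gt hQEpos
        have heq : P x / PE - Q x / QE
            = (P x - Q x) / PE + Q x * ((QE - PE) / (PE * QE)) := by
          field_simp; ring
        rw [heq]
        refine le_trans (abs_add_le _ _) (le_of_eq ?_)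
        rw [abs_div, abs_of_pos hPEpos, abs_mul, abs_div, abs_mul,
          abs_of_nonneg (hQ0 x), abs_of_pos hPEpos, abs_of_pos hQEpos]
    _ = (∑ x ∈ E, |P x - Q x|) / PE + QE * (|QE - PE| / (PE * QE)) := by
        rw [Finset.sum_add_distrib, ← Finset.sum_div, ← Finset.sum_mul]
    _ ≤ ε / PE + ε / PE := by
        have h1 : QE * (|QE - PE| / (PE * QE)) = |QE - PE| / PE := by
          field_simp
        rw [h1, abs_sub_comm]
        gcongr
    _ = 2 * ε / PE := by ring
    _ ≤ 2 * ε / α := by gcongr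
end

section
/- Suppose T, V, W are finitely-supported random variables with joint distribution P_{TVW} satisfying P_{VW}(v, w*) = α · P_V(v) for all v (for a fixed value w* and constant α > 0). Then ‖P_{TVW} − P_{VW}·P_{T|V,w*}‖₁ ≤ (2/α)·‖P_{TVW} − P_{VW}·P_{T|V}‖₁. -/
/-- Bavarian–Vidick–Yuen anchoring lemma: if
`P_{VW}(v, w*) = α·P_V(v)` for all `v` with `α > 0`, then
`‖P_{TVW} − P_{VW}·P_{T|V,w*}‖₁ ≤ (2/α)·‖P_{TVW} − P_{VW}·P_{T|V}‖₁`. -/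
theorem anchoring_lemma {T V W : Type*} [Fintype T] [Fintype V] [Fintype W]
    (P : T × V × W → ℝ)
    (hP0 : ∀ p, 0 ≤ P p) (hP1 : ∑ p, P p = 1)
    (wstar : W) (α : ℝ) (hα : 0 < α)
    (hanchor : ∀ v, (∑ t, P (t, v, wstar)) = α * ∑ t, ∑ w, P (t, v, w)) :
    ∑ t, ∑ v, ∑ w,
        |P (t, v, w) - (∑ t', P (t', v, w)) * (P (t, v, wstar) / ∑ t', P (t', v, wstar))|
      ≤ (2 / α) * ∑ t, ∑ v, ∑ w,
        |P (t, v, w) - (∑ t', P (t', v, w)) *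
          ((∑ w', P (t, v, w')) / ∑ t', ∑ w', P (t', v, w'))| := by
  classical
  have hsum1 : ∑ v, ∑ t, ∑ w, P (t, v, w) = 1 := by
    rw [← hP1, Fintype.sum_prod_type]
    rw [Finset.sum_comm]
    simp [Fintype.sum_prod_type]
  have hα1 : α ≤ 1 := by
    have h1 : ∑ v, ∑ t, P (t, v, wstar) = α := by
      simp only [hanchor, ← Finset.mul_sum, hsum1, mul_one]
    have h2 : ∑ v, ∑ t, P (t, v, wstar) ≤ ∑ v, ∑ t, ∑ w, P (t, v, w) := by
      refine Finset.sum_le_sum fun v _ => Finset.sum_le_sum fun t _ => ?_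
      exact Finset.single_le_sum (fun w _ => hP0 (t, v, w)) (Finset.mem_univ wstar)
    rw [h1, hsum1] at h2
    exact h2
  have hL : (∑ t, ∑ v, ∑ w, |P (t, v, w) - (∑ t', P (t', v, w)) *
        (P (t, v, wstar) / ∑ t', P (t', v, wstar))|)
      = ∑ v, ∑ t, ∑ w, |P (t, v, w) - (∑ t', P (t', v, w)) *
        (P (t, v, wstar) / ∑ t', P (t', v, wstar))| := Finset.sum_comm
  have hR : (∑ t, ∑ v, ∑ w, |P (t, v, w) - (∑ t', P (t', v, w)) *
        ((∑ w', P (t, v, w')) / ∑ t', ∑ w', P (t', v, w'))|)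
      = ∑ v, ∑ t, ∑ w, |P (t, v, w) - (∑ t', P (t', v, w)) *
        ((∑ w', P (t, v, w')) / ∑ t', ∑ w', P (t', v, w'))| := Finset.sum_comm
  rw [hL, hR, Finset.mul_sum]
  refine Finset.sum_le_sum fun v _ => ?_
  by_cases hA0 : (∑ t', ∑ w', P (t', v, w')) = 0
  · have hz : ∀ t w, P (t, v, w) = 0 := by
      intro t w
      have h1 : P (t, v, w) ≤ ∑ w', P (t, v, w') :=
        Finset.single_le_sum (fun w' _ => hP0 (t, v, w')) (Finset.mem_univ w)
      have h2 : ∑ w', P (t, v, w') ≤ ∑ t', ∑ w', P (t', v, w') :=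
        Finset.single_le_sum (fun t' _ => Finset.sum_nonneg fun w' _ => hP0 (t', v, w'))
          (Finset.mem_univ t)
      have h3 := h1.trans h2
      rw [hA0] at h3
      linarith [hP0 (t, v, w)]
    simp [hz]
  · have hAnn : 0 ≤ ∑ t', ∑ w', P (t', v, w') :=
      Finset.sum_nonneg fun t _ => Finset.sum_nonneg fun w _ => hP0 _
    have hApos : 0 < ∑ t', ∑ w', P (t', v, w') := lt_of_le_of_ne hAnn (Ne.symm hA0)
    have hAne : (∑ t', ∑ w', P (t', v, w')) ≠ 0 := ne_of_gt hApos
    have hαne : α ≠ 0 := ne_of_gt hα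
    have hB : (∑ t', P (t', v, wstar)) = α * ∑ t', ∑ w', P (t', v, w') := hanchor v
    have hSnn : ∀ w, 0 ≤ ∑ t', P (t', v, w) :=
      fun w => Finset.sum_nonneg fun t' _ => hP0 _
    -- pointwise triangle inequality
    have key : ∀ t w,
        |P (t, v, w) - (∑ t', P (t', v, w)) * (P (t, v, wstar) / ∑ t', P (t', v, wstar))|
          ≤ |P (t, v, w) - (∑ t', P (t', v, w)) *
              ((∑ w', P (t, v, w')) / ∑ t', ∑ w', P (t', v, w'))|
            + (∑ t', P (t', v, w)) *
              |(∑ w', P (t, v, w')) / (∑ t', ∑ w', P (t', v, w'))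
                - P (t, v, wstar) / ∑ t', P (t', v, wstar)| := by
      intro t w
      have htri := abs_sub_le (P (t, v, w))
        ((∑ t', P (t', v, w)) * ((∑ w', P (t, v, w')) / ∑ t', ∑ w', P (t', v, w')))
        ((∑ t', P (t', v, w)) * (P (t, v, wstar) / ∑ t', P (t', v, wstar)))
      calc |P (t, v, w) - (∑ t', P (t', v, w)) * (P (t, v, wstar) / ∑ t', P (t', v, wstar))|
          ≤ |P (t, v, w) - (∑ t', P (t', v, w)) *
              ((∑ w', P (t, v, w')) / ∑ t', ∑ w', P (t', v, w'))|
            + |(∑ t', P (t', v, w)) * ((∑ w', P (t, v, w')) / ∑ t', ∑ w', P (t', v, w'))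
              - (∑ t', P (t', v, w)) * (P (t, v, wstar) / ∑ t', P (t', v, wstar))| := htri
        _ = _ := by rw [← mul_sub, abs_mul, abs_of_nonneg (hSnn w)]
    have hAw : (∑ w, ∑ t', P (t', v, w)) = ∑ t', ∑ w', P (t', v, w') := Finset.sum_comm
    -- value of the cross term
    have hcross : ∀ t, (∑ t', ∑ w', P (t', v, w')) *
          |(∑ w', P (t, v, w')) / (∑ t', ∑ w', P (t', v, w'))
            - P (t, v, wstar) / ∑ t', P (t', v, wstar)|
        = (1 / α) * |P (t, v, wstar) - (∑ t', P (t', v, wstar)) *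
            ((∑ w', P (t, v, w')) / ∑ t', ∑ w', P (t', v, w'))| := by
      intro t
      rw [hB]
      have h1 : (∑ w', P (t, v, w')) / (∑ t', ∑ w', P (t', v, w'))
            - P (t, v, wstar) / (α * ∑ t', ∑ w', P (t', v, w'))
          = (α * (∑ w', P (t, v, w')) - P (t, v, wstar))
              / (α * ∑ t', ∑ w', P (t', v, w')) := by
        field_simp
      have h2 : P (t, v, wstar) - (α * ∑ t', ∑ w', P (t', v, w')) *
            ((∑ w', P (t, v, w')) / ∑ t', ∑ w', P (t', v, w'))
          = P (t, v, wstar) - α * ∑ w', P (t, v, w') := by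
        field_simp
      rw [h1, h2, abs_div,
        abs_of_pos (by positivity : (0:ℝ) < α * ∑ t', ∑ w', P (t', v, w')),
        abs_sub_comm]
      field_simp
    have hRnn : (0:ℝ) ≤ ∑ t, ∑ w, |P (t, v, w) - (∑ t', P (t', v, w)) *
        ((∑ w', P (t, v, w')) / ∑ t', ∑ w', P (t', v, w'))| :=
      Finset.sum_nonneg fun t _ => Finset.sum_nonneg fun w _ => abs_nonneg _
    calc ∑ t, ∑ w, |P (t, v, w) - (∑ t', P (t', v, w)) *
            (P (t, v, wstar) / ∑ t', P (t', v, wstar))|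
        ≤ ∑ t, ∑ w, (|P (t, v, w) - (∑ t', P (t', v, w)) *
              ((∑ w', P (t, v, w')) / ∑ t', ∑ w', P (t', v, w'))|
            + (∑ t', P (t', v, w)) *
              |(∑ w', P (t, v, w')) / (∑ t', ∑ w', P (t', v, w'))
                - P (t, v, wstar) / ∑ t', P (t', v, wstar)|) :=
          Finset.sum_le_sum fun t _ => Finset.sum_le_sum fun w _ => key t w
      _ = (∑ t, ∑ w, |P (t, v, w) - (∑ t', P (t', v, w)) *
              ((∑ w', P (t, v, w')) / ∑ t', ∑ w', P (t', v, w'))|)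
          + ∑ t, (∑ t', ∑ w', P (t', v, w')) *
              |(∑ w', P (t, v, w')) / (∑ t', ∑ w', P (t', v, w'))
                - P (t, v, wstar) / ∑ t', P (t', v, wstar)| := by
          simp only [Finset.sum_add_distrib]
          congr 1
          refine Finset.sum_congr rfl fun t _ => ?_
          rw [← Finset.sum_mul, hAw]
      _ = (∑ t, ∑ w, |P (t, v, w) - (∑ t', P (t', v, w)) *
              ((∑ w', P (t, v, w')) / ∑ t', ∑ w', P (t', v, w'))|)
          + ∑ t, (1 / α) * |P (t, v, wstar) - (∑ t', P (t', v, wstar)) *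
              ((∑ w', P (t, v, w')) / ∑ t', ∑ w', P (t', v, w'))| := by
          congr 1
          exact Finset.sum_congr rfl fun t _ => hcross t
      _ ≤ (∑ t, ∑ w, |P (t, v, w) - (∑ t', P (t', v, w)) *
              ((∑ w', P (t, v, w')) / ∑ t', ∑ w', P (t', v, w'))|)
          + ∑ t, (1 / α) * ∑ w, |P (t, v, w) - (∑ t', P (t', v, w)) *
              ((∑ w', P (t, v, w')) / ∑ t', ∑ w', P (t', v, w'))| := by
          gcongr with t ht
          exact Finset.single_le_sum
            (f := fun w => |P (t, v, w) - (∑ t', P (t', v, w)) *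
              ((∑ w', P (t, v, w')) / ∑ t', ∑ w', P (t', v, w'))|)
            (fun w _ => abs_nonneg _) (Finset.mem_univ wstar)
      _ = (∑ t, ∑ w, |P (t, v, w) - (∑ t', P (t', v, w)) *
              ((∑ w', P (t, v, w')) / ∑ t', ∑ w', P (t', v, w'))|)
          + (1 / α) * ∑ t, ∑ w, |P (t, v, w) - (∑ t', P (t', v, w)) *
              ((∑ w', P (t, v, w')) / ∑ t', ∑ w', P (t', v, w'))| := by
          rw [← Finset.mul_sum]
      _ ≤ 2 / α * ∑ t, ∑ w, |P (t, v, w) - (∑ t', P (t', v, w)) *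
              ((∑ w', P (t, v, w')) / ∑ t', ∑ w', P (t', v, w'))| := by
          have h1 : (1:ℝ) ≤ 1 / α := by
            rw [le_div_iff₀ hα]; linarith
          have h2 := mul_le_mul_of_nonneg_right h1 hRnn
          have h3 : 2 / α = 1 / α + 1 / α := by field_simp; ring
          rw [h3, add_mul]
          nlinarith [hRnn]
end

section
/- Suppose P_{ST} and P_{S'T'R'} are finitely-supported distributions such that P_T(t*) = α > 0 and P_{S|T=t*} = P_S, and suppose ‖P_{ST} − P_{S'T'}‖₁ ≤ α. Then ‖P_{S'R'|T'=t*} − P_{S'R'}‖₁ ≤ (2/α)·‖P_{S'T'R'} − P_{S'R'}·P_{T|S}‖₁ + (5/α)·‖P_{S'T'} − P_{ST}‖₁. -/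
/-!
Write `β = P_{T'}(t*)` and `C`, `D` for the two distances on the right. As `α = P_T(t*)` is a
marginal of `P_{ST}`, `|β - α| ≤ C`, so normalising by `α` instead of `β` costs at most `C / α`.
The anchoring hypothesis says that the kernel `P_{T|S}` gives `t*` mass exactly `α` wherever
`P_S(s) > 0`; hence `‖P_{S'T'R'}(·, t*, ·) - α P_{S'R'}‖₁` is at most `D` plus the `P_{S'}`-mass of
`{s | P_S(s) = 0}`, which is at most `C`. Dividing by `α` and using `α ≤ 1` gives the bound.
-/

open Finset

theorem sum_abs_div_sum_sub_div_le {ι : Type*} [Fintype ι] (f : ι → ℝ) (hf : ∀ i, 0 ≤ f i)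
    {a : ℝ} (ha : 0 < a) :
    ∑ i, |f i / ∑ j, f j - f i / a| ≤ |∑ j, f j - a| / a := by
  have hsum : ∑ i, |f i / ∑ j, f j - f i / a| = (∑ j, f j) * |(∑ j, f j)⁻¹ - a⁻¹| := by
    simp_rw [div_eq_mul_inv, ← mul_sub, abs_mul, abs_of_nonneg (hf _), sum_mul]
  rcases (sum_nonneg fun j _ => hf j : 0 ≤ ∑ j, f j).eq_or_lt with h0 | hpos
  · rw [hsum, ← h0, zero_mul]
    positivity
  · rw [hsum, inv_sub_inv hpos.ne' ha.ne', abs_div, abs_of_pos (mul_pos hpos ha), abs_sub_comm,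
      ← mul_div_assoc, mul_div_mul_left _ _ hpos.ne']

theorem sum_abs_div_sum_sub_le {ι : Type*} [Fintype ι] (f g : ι → ℝ) (hf : ∀ i, 0 ≤ f i)
    {a : ℝ} (ha : 0 < a) :
    ∑ i, |f i / ∑ j, f j - g i| ≤ |∑ j, f j - a| / a + (∑ i, |f i - a * g i|) / a := by
  have hdiv : ∀ i, |f i / a - g i| = |f i - a * g i| / a := fun i => by
    rw [div_sub' ha.ne', abs_div, abs_of_pos ha]
  calc ∑ i, |f i / ∑ j, f j - g i|
      ≤ ∑ i, (|f i / ∑ j, f j - f i / a| + |f i / a - g i|) :=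
        sum_le_sum fun i _ => abs_sub_le _ _ _
    _ ≤ |∑ j, f j - a| / a + (∑ i, |f i - a * g i|) / a := by
        rw [sum_add_distrib, sum_div]
        simp_rw [hdiv]
        gcongr
        exact sum_abs_div_sum_sub_div_le f hf ha

theorem abs_div_sum_sub_mul_sum_le {T : Type*} [Fintype T] (p q : T → ℝ) (t₀ : T) {α : ℝ}
    (hα : 0 < α) (hanchor : p t₀ / α = ∑ t, p t) :
    |p t₀ / ∑ t, p t - α| * ∑ t, q t ≤ α * ∑ t, |q t - p t| := by
  by_cases hp : ∑ t, p t = 0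
  · rw [hp, div_zero, zero_sub, abs_neg, abs_of_pos hα]
    refine mul_le_mul_of_nonneg_left ?_ hα.le
    calc ∑ t, q t = ∑ t, (q t - p t) := by rw [sum_sub_distrib, hp, sub_zero]
      _ ≤ ∑ t, |q t - p t| := sum_le_sum fun t _ => le_abs_self _
  · have hratio : p t₀ / ∑ t, p t = α := by
      rw [div_eq_iff hp, ← hanchor, mul_div_cancel₀ _ hα.ne']
    rw [hratio, sub_self, abs_zero, zero_mul]
    exact mul_nonneg hα.le (sum_nonneg fun t _ => abs_nonneg _)

theorem sum_abs_sub_mul_marginal_le {T R : Type*} [Fintype T] [Fintype R]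
    (Q : T → R → ℝ) (hQ : ∀ t r, 0 ≤ Q t r) (p : T → ℝ) (t₀ : T) {α : ℝ} (hα : 0 < α)
    (hanchor : p t₀ / α = ∑ t, p t) :
    ∑ r, |Q t₀ r - α * ∑ t, Q t r|
      ≤ ∑ t, ∑ r, |Q t r - (∑ t', Q t' r) * (p t / ∑ t', p t')|
        + α * ∑ t, |∑ r, Q t r - p t| := by
  set κ := p t₀ / ∑ t', p t'
  have hsplit : ∀ r, |Q t₀ r - α * ∑ t, Q t r|
      ≤ |Q t₀ r - (∑ t, Q t r) * κ| + |κ - α| * ∑ t, Q t r := fun r => by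
    have hq : 0 ≤ ∑ t, Q t r := sum_nonneg fun t _ => hQ t r
    calc |Q t₀ r - α * ∑ t, Q t r|
        ≤ |Q t₀ r - (∑ t, Q t r) * κ| + |(∑ t, Q t r) * κ - α * ∑ t, Q t r| := abs_sub_le _ _ _
      _ = |Q t₀ r - (∑ t, Q t r) * κ| + |κ - α| * ∑ t, Q t r := by
        rw [mul_comm α, ← mul_sub, abs_mul, abs_of_nonneg hq, mul_comm _ |κ - α|]
  calc ∑ r, |Q t₀ r - α * ∑ t, Q t r|
      ≤ ∑ r, |Q t₀ r - (∑ t, Q t r) * κ| + |κ - α| * ∑ t, ∑ r, Q t r := by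
        rw [sum_comm (γ := T), mul_sum, ← sum_add_distrib]
        exact sum_le_sum fun r _ => hsplit r
    _ ≤ ∑ t, ∑ r, |Q t r - (∑ t', Q t' r) * (p t / ∑ t', p t')|
        + α * ∑ t, |∑ r, Q t r - p t| := by
        refine add_le_add ?_ (abs_div_sum_sub_mul_sum_le p (fun t => ∑ r, Q t r) t₀ hα hanchor)
        exact single_le_sum (f := fun t => ∑ r, |Q t r - (∑ t', Q t' r) * (p t / ∑ t', p t')|)
          (fun t _ => sum_nonneg fun r _ => abs_nonneg _) (mem_univ t₀)

theorem anchored_conditioning_i_general {S T R : Type*} [Fintype S] [Fintype T] [Fintype R]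
    (P : S × T → ℝ) (Q : S × T × R → ℝ)
    (hP0 : ∀ p, 0 ≤ P p) (hP1 : ∑ p, P p = 1)
    (hQ0 : ∀ q, 0 ≤ Q q)
    (tstar : T) (α : ℝ) (hα : 0 < α)
    (hPT : ∑ s, P (s, tstar) = α)
    (hanchor : ∀ s, P (s, tstar) / α = ∑ t, P (s, t)) :
    ∑ s, ∑ r,
        |Q (s, tstar, r) / (∑ s', ∑ r', Q (s', tstar, r')) - ∑ t, Q (s, t, r)|
      ≤ (2 / α) * (∑ s, ∑ t, ∑ r,
            |Q (s, t, r) - (∑ t', Q (s, t', r)) * (P (s, t) / ∑ t', P (s, t'))|)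
        + (5 / α) * ∑ s, ∑ t, |(∑ r, Q (s, t, r)) - P (s, t)| := by
  set C := ∑ s, ∑ t, |(∑ r, Q (s, t, r)) - P (s, t)|
  set D := ∑ s, ∑ t, ∑ r,
    |Q (s, t, r) - (∑ t', Q (s, t', r)) * (P (s, t) / ∑ t', P (s, t'))|
  have hC : 0 ≤ C := by positivity
  have hD : 0 ≤ D := by positivity
  have hα1 : α ≤ 1 := by
    rw [← hPT, ← hP1, Fintype.sum_prod_type]
    exact sum_le_sum fun s _ => single_le_sum (fun t _ => hP0 (s, t)) (mem_univ tstar)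
  have hmass : |∑ s, ∑ r, Q (s, tstar, r) - α| ≤ C := by
    rw [← hPT, ← sum_sub_distrib]
    refine (abs_sum_le_sum_abs _ _).trans (sum_le_sum fun s _ => ?_)
    exact single_le_sum (f := fun t => |(∑ r, Q (s, t, r)) - P (s, t)|)
      (fun t _ => abs_nonneg _) (mem_univ tstar)
  have hkernel : ∑ s, ∑ r, |Q (s, tstar, r) - α * ∑ t, Q (s, t, r)| ≤ D + α * C := by
    rw [mul_sum, ← sum_add_distrib]
    exact sum_le_sum fun s _ => sum_abs_sub_mul_marginal_le (fun t r => Q (s, t, r))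
      (fun t r => hQ0 _) (fun t => P (s, t)) tstar hα (hanchor s)
  have hsplit := sum_abs_div_sum_sub_le (fun x : S × R => Q (x.1, tstar, x.2))
    (fun x => ∑ t, Q (x.1, t, x.2)) (fun x => hQ0 _) hα
  simp only [Fintype.sum_prod_type] at hsplit
  calc _ ≤ C / α + (D + α * C) / α := hsplit.trans (by gcongr)
    _ ≤ 2 / α * D + 5 / α * C := by
        rw [← add_div, div_le_iff₀ hα]
        field_simp
        nlinarith

/-- Suppose `P_{ST}` and `Q = P_{S'T'R'}` are distributions with
`P_T(t*) = α > 0`, `P_{S|T=t*} = P_S`, and `‖P_{ST} − P_{S'T'}‖₁ ≤ α`.  Then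
`‖P_{S'R'|T'=t*} − P_{S'R'}‖₁ ≤ (2/α)‖P_{S'T'R'} − P_{S'R'}·P_{T|S}‖₁
  + (5/α)‖P_{S'T'} − P_{ST}‖₁`. -/
theorem anchored_conditioning_i {S T R : Type*} [Fintype S] [Fintype T] [Fintype R]
    (P : S × T → ℝ) (Q : S × T × R → ℝ)
    (hP0 : ∀ p, 0 ≤ P p) (hP1 : ∑ p, P p = 1)
    (hQ0 : ∀ q, 0 ≤ Q q) (hQ1 : ∑ q, Q q = 1)
    (tstar : T) (α : ℝ) (hα : 0 < α)
    (hPT : ∑ s, P (s, tstar) = α)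
    (hanchor : ∀ s, P (s, tstar) / α = ∑ t, P (s, t))
    (hclose : ∑ s, ∑ t, |(∑ r, Q (s, t, r)) - P (s, t)| ≤ α) :
    ∑ s, ∑ r,
        |Q (s, tstar, r) / (∑ s', ∑ r', Q (s', tstar, r')) - ∑ t, Q (s, t, r)|
      ≤ (2 / α) * (∑ s, ∑ t, ∑ r,
            |Q (s, t, r) - (∑ t', Q (s, t', r)) * (P (s, t) / ∑ t', P (s, t'))|)
        + (5 / α) * ∑ s, ∑ t, |(∑ r, Q (s, t, r)) - P (s, t)| :=
  anchored_conditioning_i_general P Q hP0 hP1 hQ0 tstar α hα hPT hanchor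
end

section
/- Suppose Alice and Bob run the ECD protocol with honest boxes, where each of l magic-square box pairs independently wins MS with probability at least 1 − ε/2, T ⊆ [l] is a uniformly random test subset of size γl (independent of the boxes' behaviour given |S| > γl), and the protocol accepts (outputs ⊤) iff |S| > γl and the MS winning condition holds on at least (1−ε)|T| indices of T. Then, with α,γ < 1/2 and l ≥ 4/(1−2γ)², the acceptance probability satisfies p_⊤ ≥ (1 − 2^{−(1−2γ)²l/8})(1 − 2^{−ε²γl/8}) ≥ 1 − 2^{−(1−2γ)²l/8} − 2^{−ε²γl/8}. -/
open Finset Real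

private lemma exp_quad {x : ℝ} (hx : 0 ≤ x) : Real.exp (-x) ≤ 1 - x + x ^ 2 / 2 := by
  have h1 : 1 + x + x ^ 2 / 2 ≤ Real.exp x := by
    have h := Real.sum_le_exp_of_nonneg hx 3
    simp [Finset.sum_range_succ] at h
    nlinarith [h]
  have hme : Real.exp (-x) * Real.exp x = 1 := by
    rw [← Real.exp_add]; simp
  nlinarith [Real.exp_pos (-x), mul_le_mul_of_nonneg_left h1 (Real.exp_pos (-x)).le, sq_nonneg (x^2)]

private lemma per_trial {a p t b : ℝ} (ha0 : 0 ≤ a) (ha1 : a ≤ 1) (hap : a ≤ p) (hp1 : p ≤ 1)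
    (ht0 : 0 ≤ t) (hta : t ≤ a) (hb : b = a - t) :
    (1 - p + p * Real.exp (-t)) * Real.exp (t * b) ≤ Real.exp (-(t ^ 2) / 2) := by
  have he1 : Real.exp (-t) ≤ 1 := Real.exp_le_one_iff.mpr (by linarith)
  have h2 : 1 - p + p * Real.exp (-t) ≤ 1 - a * (1 - Real.exp (-t)) := by nlinarith
  have h3 : 1 - a * (1 - Real.exp (-t)) ≤ Real.exp (-(a * (1 - Real.exp (-t)))) := by
    nlinarith [Real.add_one_le_exp (-(a * (1 - Real.exp (-t))))]
  have h4 : (1 - p + p * Real.exp (-t)) * Real.exp (t * b)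
      ≤ Real.exp (-(a * (1 - Real.exp (-t)))) * Real.exp (t * b) :=
    mul_le_mul_of_nonneg_right (h2.trans h3) (Real.exp_pos _).le
  rw [← Real.exp_add] at h4
  refine h4.trans (Real.exp_le_exp.mpr ?_)
  have hq := exp_quad ht0
  subst hb
  nlinarith [sq_nonneg t, mul_le_mul_of_nonneg_left hq ha0]

private lemma sum_card_pow (l : ℕ) (x y : ℝ) :
    ∑ S : Finset (Fin l), x ^ S.card * y ^ (l - S.card) = (x + y) ^ l := by
  have h := Fintype.prod_add (fun _ : Fin l => x) (fun _ : Fin l => y)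
  simp only [Finset.prod_const, Finset.card_compl, Fintype.card_fin, Finset.prod_const] at h
  simpa using h.symm

private lemma sum_pi_bool {l : ℕ} (f : Fin l → Bool → ℝ) :
    ∑ w : Fin l → Bool, ∏ i, f i (w i) = ∏ i, (f i true + f i false) := by
  rw [← Fintype.prod_sum f]
  simp

private lemma chernoff_S {l : ℕ} {α γ : ℝ} (hα0 : 0 ≤ α) (hα : α < 1/2)
    (hγ0 : 0 ≤ γ) (hγ : γ < 1/2) :
    1 - Real.exp (-((1/2 - γ) ^ 2) / 2 * l) ≤
      ∑ S : Finset (Fin l), ((1 - α) ^ S.card * α ^ (l - S.card))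
        * (if γ * l < (S.card : ℝ) then 1 else 0) := by
  set t : ℝ := 1/2 - γ with ht
  have ht0 : 0 ≤ t := by rw [ht]; linarith
  have hμ : ∀ S : Finset (Fin l), 0 ≤ (1 - α) ^ S.card * α ^ (l - S.card) := by
    intro S
    have h1 : (0:ℝ) ≤ 1 - α := by linarith
    positivity
  have key : ∀ S : Finset (Fin l),
      (1 - α) ^ S.card * α ^ (l - S.card)
        - (1 - α) ^ S.card * α ^ (l - S.card) * Real.exp (t * (γ * l - S.card))
      ≤ ((1 - α) ^ S.card * α ^ (l - S.card)) * (if γ * l < (S.card : ℝ) then 1 else 0) := by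
    intro S
    by_cases h : γ * l < (S.card : ℝ)
    · rw [if_pos h]
      have := mul_nonneg (hμ S) (Real.exp_pos (t * (γ * l - S.card))).le
      linarith
    · rw [if_neg h]
      push_neg at h
      have harg : 0 ≤ t * (γ * l - S.card) := mul_nonneg ht0 (by linarith)
      have := mul_le_mul_of_nonneg_left (Real.one_le_exp harg) (hμ S)
      nlinarith
  have hsum := Finset.sum_le_sum (fun S (_ : S ∈ Finset.univ) => key S)
  rw [Finset.sum_sub_distrib] at hsum
  have h1 : ∑ S : Finset (Fin l), (1 - α) ^ S.card * α ^ (l - S.card) = 1 := by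
    rw [sum_card_pow]; norm_num
  have h2 : ∑ S : Finset (Fin l),
      (1 - α) ^ S.card * α ^ (l - S.card) * Real.exp (t * (γ * l - S.card))
      = (((1 - α) * Real.exp (-t) + α) * Real.exp (t * γ)) ^ l := by
    have e1 : ∀ S : Finset (Fin l),
        (1 - α) ^ S.card * α ^ (l - S.card) * Real.exp (t * (γ * l - S.card))
        = (((1 - α) * Real.exp (-t)) ^ S.card * α ^ (l - S.card)) * Real.exp (t * (γ * l)) := by
      intro S
      have : Real.exp (t * (γ * l - S.card))
          = Real.exp (t * (γ * l)) * Real.exp (-t) ^ S.card := by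
        rw [← Real.exp_nat_mul, ← Real.exp_add]
        ring_nf
      rw [this, mul_pow]
      ring
    rw [Finset.sum_congr rfl (fun S _ => e1 S), ← Finset.sum_mul, sum_card_pow]
    rw [show t * (γ * l) = (l : ℕ) * (t * γ) by push_cast; ring, Real.exp_nat_mul, ← mul_pow]
  rw [h1, h2] at hsum
  have hbase : (((1 - α) * Real.exp (-t) + α) * Real.exp (t * γ)) ^ l
      ≤ Real.exp (-(t ^ 2) / 2) ^ l := by
    apply pow_le_pow_left₀
    · have h1' : (0:ℝ) ≤ 1 - α := by linarith
      positivity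
    · have hpt := per_trial (a := 1/2) (p := 1 - α) (t := t) (b := γ)
        (by norm_num) (by norm_num) (by linarith) (by linarith) ht0 (by rw [ht]; linarith)
        (by rw [ht]; ring)
      calc ((1 - α) * Real.exp (-t) + α) * Real.exp (t * γ)
          = (1 - (1 - α) + (1 - α) * Real.exp (-t)) * Real.exp (t * γ) := by ring
        _ ≤ _ := hpt
  have hbase' : (((1 - α) * Real.exp (-t) + α) * Real.exp (t * γ)) ^ l
      ≤ Real.exp (-(t ^ 2) / 2 * l) := by
    rw [show (-(t ^ 2) / 2 * (l:ℝ)) = (l:ℕ) * (-(t ^ 2) / 2) by push_cast; ring,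
      Real.exp_nat_mul]
    exact hbase
  linarith

private lemma chernoff_w {l k : ℕ} {γ ε : ℝ} (hγ0 : 0 ≤ γ) (hε0 : 0 < ε) (hε1 : ε ≤ 1)
    (hk : (k : ℝ) = γ * l)
    (q : Fin l → ℝ) (hq : ∀ i, 1 - ε / 2 ≤ q i ∧ q i ≤ 1)
    (T : Finset (Fin l)) (hT : T.card = k) :
    1 - Real.exp (-((ε/2) ^ 2) / 2 * k) ≤
      ∑ w : Fin l → Bool, (∏ i, if w i then q i else 1 - q i)
        * (if (1 - ε) * γ * l ≤ ∑ i ∈ T, (if w i then (1:ℝ) else 0) then 1 else 0) := by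
  set s : ℝ := ε/2 with hs
  have hs0 : 0 ≤ s := by rw [hs]; linarith
  have hg : ∀ w : Fin l → Bool, 0 ≤ ∏ i, (if w i then q i else 1 - q i) := by
    intro w
    apply Finset.prod_nonneg
    intro i _
    by_cases h : w i <;> simp [h]
    · linarith [(hq i).1]
    · linarith [(hq i).2]
  have key : ∀ w : Fin l → Bool,
      (∏ i, (if w i then q i else 1 - q i))
        - (∏ i, (if w i then q i else 1 - q i))
          * Real.exp (s * ((1 - ε) * γ * l - ∑ i ∈ T, (if w i then (1:ℝ) else 0)))
      ≤ (∏ i, (if w i then q i else 1 - q i))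
        * (if (1 - ε) * γ * l ≤ ∑ i ∈ T, (if w i then (1:ℝ) else 0) then 1 else 0) := by
    intro w
    by_cases h : (1 - ε) * γ * l ≤ ∑ i ∈ T, (if w i then (1:ℝ) else 0)
    · rw [if_pos h]
      have := mul_nonneg (hg w) (Real.exp_pos (s * ((1 - ε) * γ * l - ∑ i ∈ T, (if w i then (1:ℝ) else 0)))).le
      linarith
    · rw [if_neg h]
      push_neg at h
      have harg : 0 ≤ s * ((1 - ε) * γ * l - ∑ i ∈ T, (if w i then (1:ℝ) else 0)) :=
        mul_nonneg hs0 (by linarith)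
      have := mul_le_mul_of_nonneg_left (Real.one_le_exp harg) (hg w)
      nlinarith
  have hsum := Finset.sum_le_sum (fun w (_ : w ∈ Finset.univ) => key w)
  rw [Finset.sum_sub_distrib] at hsum
  have h1 : ∑ w : Fin l → Bool, ∏ i, (if w i then q i else 1 - q i) = 1 := by
    rw [sum_pi_bool (fun i b => if b then q i else 1 - q i)]
    simp
  have h2 : ∑ w : Fin l → Bool,
      (∏ i, (if w i then q i else 1 - q i))
        * Real.exp (s * ((1 - ε) * γ * l - ∑ i ∈ T, (if w i then (1:ℝ) else 0)))
      ≤ Real.exp (-(s ^ 2) / 2 * k) := by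
    have e1 : ∀ w : Fin l → Bool,
        (∏ i, (if w i then q i else 1 - q i))
          * Real.exp (s * ((1 - ε) * γ * l - ∑ i ∈ T, (if w i then (1:ℝ) else 0)))
        = Real.exp (s * ((1 - ε) * γ * l))
          * ∏ i, ((if w i then q i else 1 - q i)
              * (if i ∈ T then Real.exp (-(s * (if w i then (1:ℝ) else 0))) else 1)) := by
      intro w
      have hexp : Real.exp (s * ((1 - ε) * γ * l - ∑ i ∈ T, (if w i then (1:ℝ) else 0)))
          = Real.exp (s * ((1 - ε) * γ * l))
            * ∏ i ∈ T, Real.exp (-(s * (if w i then (1:ℝ) else 0))) := by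
        rw [← Real.exp_sum, ← Real.exp_add]
        congr 1
        rw [Finset.sum_neg_distrib, ← Finset.mul_sum]
        ring
      have hmem : ∏ i ∈ T, Real.exp (-(s * (if w i then (1:ℝ) else 0)))
          = ∏ i, (if i ∈ T then Real.exp (-(s * (if w i then (1:ℝ) else 0))) else 1) := by
        rw [Finset.prod_ite_mem Finset.univ T
          (fun i => Real.exp (-(s * (if w i then (1:ℝ) else 0)))), Finset.univ_inter]
      rw [hexp, hmem, Finset.prod_mul_distrib]
      ring
    rw [Finset.sum_congr rfl (fun w _ => e1 w), ← Finset.mul_sum]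
    rw [sum_pi_bool (fun i b => (if b then q i else 1 - q i)
      * (if i ∈ T then Real.exp (-(s * (if b then (1:ℝ) else 0))) else 1))]
    have e2 : ∀ i : Fin l,
        ((if true then q i else 1 - q i) * (if i ∈ T then Real.exp (-(s * (if true then (1:ℝ) else 0))) else 1)
          + (if false then q i else 1 - q i) * (if i ∈ T then Real.exp (-(s * (if false then (1:ℝ) else 0))) else 1))
        = if i ∈ T then q i * Real.exp (-s) + (1 - q i) else 1 := by
      intro i
      by_cases h : i ∈ T <;> simp [h] <;> ring_nf
    rw [Finset.prod_congr rfl (fun i _ => e2 i), Finset.prod_ite_mem Finset.univ T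
      (fun i => q i * Real.exp (-s) + (1 - q i)), Finset.univ_inter]
    have hec : Real.exp (s * ((1 - ε) * γ * l)) = ∏ _i ∈ T, Real.exp (s * (1 - ε)) := by
      rw [Finset.prod_const, hT, ← Real.exp_nat_mul, hk]
      congr 1
      ring
    rw [hec, ← Finset.prod_mul_distrib]
    have hstep : ∀ i ∈ T, Real.exp (s * (1 - ε)) * (q i * Real.exp (-s) + (1 - q i))
        ≤ Real.exp (-(s ^ 2) / 2) := by
      intro i _
      have hpt := per_trial (a := 1 - ε/2) (p := q i) (t := s) (b := 1 - ε)
        (by linarith) (by linarith) (hq i).1 (hq i).2 hs0 (by rw [hs]; linarith)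
        (by rw [hs]; ring)
      calc Real.exp (s * (1 - ε)) * (q i * Real.exp (-s) + (1 - q i))
          = (1 - q i + q i * Real.exp (-s)) * Real.exp (s * (1 - ε)) := by ring
        _ ≤ _ := hpt
    calc ∏ i ∈ T, Real.exp (s * (1 - ε)) * (q i * Real.exp (-s) + (1 - q i))
        ≤ ∏ _i ∈ T, Real.exp (-(s ^ 2) / 2) := by
          apply Finset.prod_le_prod
          · intro i _
            have h1' : 0 ≤ q i := by linarith [(hq i).1]
            have h2' : 0 ≤ 1 - q i := by linarith [(hq i).2]
            positivity
          · exact hstep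
      _ = Real.exp (-(s ^ 2) / 2 * k) := by
          rw [Finset.prod_const, hT, ← Real.exp_nat_mul]
          ring_nf
  rw [h1] at hsum
  linarith

/-- completeness of the ECD protocol with honest boxes:
`S ⊆ [l]` includes each index independently with probability `1−α`; the per-index
magic-square win indicators `w : Fin l → Bool` are independent Bernoulli variables
with success probabilities `q i ≥ 1 − ε/2`; `T` is a uniformly random subset of size
`k = γl`, independent of everything else.  The protocol accepts iff `|S| > γl` and
at least `(1−ε)|T|` of the indices in `T` win.  Then, for `α, γ < 1/2` and
`l ≥ 4/(1−2γ)²`, the acceptance probability `p_⊤` satisfies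
`p_⊤ ≥ (1 − 2^{−(1−2γ)²l/8})(1 − 2^{−ε²γl/8}) ≥ 1 − 2^{−(1−2γ)²l/8} − 2^{−ε²γl/8}`. -/
theorem ecd_completeness (l k : ℕ) (α γ ε : ℝ)
    (hα0 : 0 ≤ α) (hα : α < 1 / 2) (hγ0 : 0 ≤ γ) (hγ : γ < 1 / 2)
    (hk : (k : ℝ) = γ * l)
    (hl : (4 : ℝ) / (1 - 2 * γ) ^ 2 ≤ l)
    (hε0 : 0 < ε) (hε1 : ε ≤ 1)
    (q : Fin l → ℝ) (hq : ∀ i, 1 - ε / 2 ≤ q i ∧ q i ≤ 1) :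
    ((1 - (2 : ℝ) ^ (-(1 - 2 * γ) ^ 2 * l / 8)) * (1 - (2 : ℝ) ^ (-(ε ^ 2 * γ * l) / 8))
        ≤ ∑ S : Finset (Fin l), ∑ w : Fin l → Bool,
            ∑ T ∈ Finset.univ.filter (fun T : Finset (Fin l) => T.card = k),
              ((1 - α) ^ S.card * α ^ (l - S.card))
                * (∏ i, if w i then q i else 1 - q i)
                * ((l.choose k : ℝ))⁻¹
                * (if (γ * l < S.card) ∧
                      ((1 - ε) * γ * l ≤ ∑ i ∈ T, (if w i then (1 : ℝ) else 0))
                   then 1 else 0))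
      ∧ 1 - (2 : ℝ) ^ (-(1 - 2 * γ) ^ 2 * l / 8) - (2 : ℝ) ^ (-(ε ^ 2 * γ * l) / 8)
          ≤ (1 - (2 : ℝ) ^ (-(1 - 2 * γ) ^ 2 * l / 8))
            * (1 - (2 : ℝ) ^ (-(ε ^ 2 * γ * l) / 8)) := by
  have hA0 : (0:ℝ) ≤ (2 : ℝ) ^ (-(1 - 2 * γ) ^ 2 * l / 8) :=
    (Real.rpow_pos_of_pos two_pos _).le
  have hB0 : (0:ℝ) ≤ (2 : ℝ) ^ (-(ε ^ 2 * γ * l) / 8) :=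
    (Real.rpow_pos_of_pos two_pos _).le
  have hεγl : (0:ℝ) ≤ ε ^ 2 * γ * l := by positivity
  have hB1 : (2 : ℝ) ^ (-(ε ^ 2 * γ * l) / 8) ≤ 1 :=
    Real.rpow_le_one_of_one_le_of_nonpos one_le_two (by linarith)
  have hlog1 : Real.log 2 ≤ 1 := by
    have := Real.log_le_sub_one_of_pos (by norm_num : (0:ℝ) < 2); linarith
  have hlog0 : (0:ℝ) ≤ Real.log 2 := Real.log_nonneg one_le_two
  have hln : (0:ℝ) ≤ (l:ℝ) := Nat.cast_nonneg l
  refine ⟨?_, by nlinarith [mul_nonneg hA0 hB0]⟩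
  set X := ∑ S : Finset (Fin l),
      ((1 - α) ^ S.card * α ^ (l - S.card)) * (if γ * l < (S.card : ℝ) then 1 else 0) with hX
  set Y := ∑ w : Fin l → Bool,
      ∑ T ∈ Finset.univ.filter (fun T : Finset (Fin l) => T.card = k),
        (∏ i, if w i then q i else 1 - q i) * ((l.choose k : ℝ))⁻¹
          * (if (1 - ε) * γ * l ≤ ∑ i ∈ T, (if w i then (1:ℝ) else 0) then 1 else 0) with hY
  have hfact : (∑ S : Finset (Fin l), ∑ w : Fin l → Bool,
      ∑ T ∈ Finset.univ.filter (fun T : Finset (Fin l) => T.card = k),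
        ((1 - α) ^ S.card * α ^ (l - S.card))
          * (∏ i, if w i then q i else 1 - q i)
          * ((l.choose k : ℝ))⁻¹
          * (if (γ * l < S.card) ∧
                ((1 - ε) * γ * l ≤ ∑ i ∈ T, (if w i then (1 : ℝ) else 0))
             then 1 else 0)) = X * Y := by
    rw [hX, hY, Finset.sum_mul_sum]
    refine Finset.sum_congr rfl fun S _ => Finset.sum_congr rfl fun w _ => ?_
    rw [Finset.mul_sum]
    refine Finset.sum_congr rfl fun T _ => ?_
    by_cases h1 : γ * l < (S.card : ℝ) <;>
      by_cases h2 : (1 - ε) * γ * l ≤ ∑ i ∈ T, (if w i then (1:ℝ) else 0) <;>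
      simp [h1, h2] <;> ring
  rw [hfact]
  have hX0 : 0 ≤ X := by
    rw [hX]
    refine Finset.sum_nonneg fun S _ => mul_nonneg (mul_nonneg ?_ ?_) ?_
    · exact pow_nonneg (by linarith) _
    · exact pow_nonneg hα0 _
    · split <;> norm_num
  have hXb : 1 - (2 : ℝ) ^ (-(1 - 2 * γ) ^ 2 * l / 8) ≤ X := by
    have h := chernoff_S (l := l) hα0 hα hγ0 hγ
    have hcmp : Real.exp (-((1/2 - γ) ^ 2) / 2 * l) ≤ (2 : ℝ) ^ (-(1 - 2 * γ) ^ 2 * l / 8) := by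
      rw [Real.rpow_def_of_pos (by norm_num : (0:ℝ) < 2)]
      apply Real.exp_le_exp.mpr
      nlinarith [mul_le_mul_of_nonneg_right hlog1 (mul_nonneg (sq_nonneg (1/2 - γ)) hln)]
    rw [hX]
    calc 1 - (2 : ℝ) ^ (-(1 - 2 * γ) ^ 2 * l / 8)
        ≤ 1 - Real.exp (-((1/2 - γ) ^ 2) / 2 * l) := by linarith
      _ ≤ _ := h
  have hkl : k ≤ l := by
    have : (k:ℝ) ≤ (l:ℝ) := by rw [hk]; nlinarith
    exact_mod_cast this
  have hchoose : (0:ℝ) < (l.choose k : ℝ) := by exact_mod_cast Nat.choose_pos hkl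
  have hcard : (Finset.univ.filter (fun T : Finset (Fin l) => T.card = k)).card
      = l.choose k := by
    rw [← Finset.powerset_univ, ← Finset.powersetCard_eq_filter, Finset.card_powersetCard,
      Finset.card_univ, Fintype.card_fin]
  have hBexp : Real.exp (-((ε/2) ^ 2) / 2 * k) ≤ (2 : ℝ) ^ (-(ε ^ 2 * γ * l) / 8) := by
    rw [Real.rpow_def_of_pos (by norm_num : (0:ℝ) < 2)]
    apply Real.exp_le_exp.mpr
    rw [hk]
    nlinarith [mul_le_mul_of_nonneg_right hlog1 hεγl]
  have hYb : 1 - (2 : ℝ) ^ (-(ε ^ 2 * γ * l) / 8) ≤ Y := by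
    rw [hY, Finset.sum_comm]
    have hperT : ∀ T ∈ Finset.univ.filter (fun T : Finset (Fin l) => T.card = k),
        ((l.choose k : ℝ))⁻¹ * (1 - (2 : ℝ) ^ (-(ε ^ 2 * γ * l) / 8))
        ≤ ∑ w : Fin l → Bool,
            (∏ i, if w i then q i else 1 - q i) * ((l.choose k : ℝ))⁻¹
              * (if (1 - ε) * γ * l ≤ ∑ i ∈ T, (if w i then (1:ℝ) else 0) then 1 else 0) := by
      intro T hT
      rw [Finset.mem_filter] at hT
      have hcw := chernoff_w hγ0 hε0 hε1 hk q hq T hT.2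
      have hstep : 1 - (2 : ℝ) ^ (-(ε ^ 2 * γ * l) / 8)
          ≤ ∑ w : Fin l → Bool, (∏ i, if w i then q i else 1 - q i)
              * (if (1 - ε) * γ * l ≤ ∑ i ∈ T, (if w i then (1:ℝ) else 0) then 1 else 0) := by
        refine le_trans (by linarith) hcw
      calc ((l.choose k : ℝ))⁻¹ * (1 - (2 : ℝ) ^ (-(ε ^ 2 * γ * l) / 8))
          ≤ ((l.choose k : ℝ))⁻¹ * (∑ w : Fin l → Bool, (∏ i, if w i then q i else 1 - q i)
              * (if (1 - ε) * γ * l ≤ ∑ i ∈ T, (if w i then (1:ℝ) else 0) then 1 else 0)) :=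
            mul_le_mul_of_nonneg_left hstep (inv_nonneg.mpr hchoose.le)
        _ = _ := by
            rw [Finset.mul_sum]
            exact Finset.sum_congr rfl fun w _ => by ring
    have hsum := Finset.sum_le_sum hperT
    rw [Finset.sum_const, hcard, nsmul_eq_mul, ← mul_assoc,
      mul_inv_cancel₀ hchoose.ne', one_mul] at hsum
    exact hsum
  exact mul_le_mul hXb hYb (by linarith) hX0
end

section
/- For any two quantum states ρ and σ, B(ρ,σ)² ≤ ln 2 · D(ρ‖σ), where B is the Bures distance and D is the quantum relative entropy (in bits). -/
open Matrix
open scoped ComplexOrder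

/-- The square root of a positive semidefinite matrix (the Mathlib definition of
December 2024, since removed). -/
noncomputable def Matrix.PosSemidef.sqrt {n : Type*} [Fintype n] [DecidableEq n]
    {A : Matrix n n ℂ} (hA : A.PosSemidef) : Matrix n n ℂ :=
  hA.1.eigenvectorUnitary.1 * diagonal ((↑) ∘ (√·) ∘ hA.1.eigenvalues) *
    (star hA.1.eigenvectorUnitary : Matrix n n ℂ)

/-- The trace norm `‖A‖₁ = Tr √(AᴴA)` of a complex matrix. -/
noncomputable def traceNorm {n : Type*} [Fintype n] [DecidableEq n]
    (A : Matrix n n ℂ) : ℝ :=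
  ((Matrix.posSemidef_conjTranspose_mul_self A).sqrt).trace.re

open scoped Classical in
/-- The fidelity `F(ρ,σ) = ‖√ρ √σ‖₁` between two quantum states. -/
noncomputable def fidelity {n : Type*} [Fintype n] [DecidableEq n]
    (ρ σ : Matrix n n ℂ) : ℝ :=
  if h : ρ.PosSemidef ∧ σ.PosSemidef then traceNorm (h.1.sqrt * h.2.sqrt) else 0

/-- The Bures distance `B(ρ,σ) = √(1 − F(ρ,σ))`. -/
noncomputable def bures {n : Type*} [Fintype n] [DecidableEq n]
    (ρ σ : Matrix n n ℂ) : ℝ :=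
  Real.sqrt (1 - fidelity ρ σ)

open scoped Classical in
/-- The base-2 matrix logarithm of a Hermitian matrix, via its spectral
decomposition (junk value `0` on non-Hermitian matrices). -/
noncomputable def matLog2 {n : Type*} [Fintype n] [DecidableEq n]
    (A : Matrix n n ℂ) : Matrix n n ℂ :=
  if h : A.IsHermitian then h.cfc (fun x => Real.logb 2 x) else 0

open scoped Classical in
/-- The quantum relative entropy `D(ρ‖σ)` in bits, defined to be `+∞` when
`supp ρ ⊄ supp σ` (i.e. when `ker σ ⊄ ker ρ`). -/
noncomputable def relEntE {n : Type*} [Fintype n] [DecidableEq n]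
    (ρ σ : Matrix n n ℂ) : EReal :=
  if ∀ v : n → ℂ, σ.mulVec v = 0 → ρ.mulVec v = 0
  then ((((ρ * (matLog2 ρ - matLog2 σ)).trace).re : ℝ) : EReal)
  else ⊤

/-!
Diagonalize `ρ = ∑ᵢ pᵢ |uᵢ⟩⟨uᵢ|` and `σ = ∑ⱼ qⱼ |vⱼ⟩⟨vⱼ|` and put `cᵢⱼ = |⟨uᵢ, vⱼ⟩|²`, a doubly
stochastic matrix. Then `ln 2 · D(ρ‖σ) = ∑ᵢⱼ pᵢ (ln pᵢ − ln qⱼ) cᵢⱼ` is the Kullback–Leibler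
divergence between the joint distributions `pᵢ cᵢⱼ` and `qⱼ cᵢⱼ`, and
`T = Tr (√ρ √σ) = ∑ᵢⱼ √pᵢ √qⱼ cᵢⱼ` is their Bhattacharyya coefficient, so `ln x ≤ x − 1` applied
termwise gives `2 (1 − T) ≤ ln 2 · D(ρ‖σ)`. Finally `T ≤ 1`, and
`T = Re Tr (√ρ √σ) ≤ ‖√ρ √σ‖₁ = F(ρ, σ)`, so `B(ρ, σ)² ≤ 1 − T`.
-/

open Finset Real

namespace Matrix

lemma re_apply_le_sqrt_re_conjTranspose_mul_self_apply {n : Type*} [Fintype n]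
    (N : Matrix n n ℂ) (i : n) : (N i i).re ≤ √((Nᴴ * N) i i).re := by
  have hcol : ((Nᴴ * N) i i).re = ∑ k, Complex.normSq (N k i) := by
    simp only [mul_apply, conjTranspose_apply, Complex.star_def, ← Complex.normSq_eq_conj_mul_self]
    norm_cast
  calc (N i i).re ≤ ‖N i i‖ := Complex.re_le_norm _
    _ = √(Complex.normSq (N i i)) := Complex.norm_def _
    _ ≤ √((Nᴴ * N) i i).re := by
      rw [hcol]
      exact sqrt_le_sqrt (single_le_sum (fun k _ => Complex.normSq_nonneg (N k i))
        (mem_univ i))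

variable {n : Type*} [Fintype n] [DecidableEq n]

lemma map_normSq_mem_doublyStochastic {W : Matrix n n ℂ} (hW : W ∈ unitaryGroup n ℂ) :
    W.map Complex.normSq ∈ doublyStochastic ℝ n := by
  have hrow : ∀ i, ∑ j, Complex.normSq (W i j) = 1 := fun i => by
    have h := congr_fun₂ (mem_unitaryGroup_iff.mp hW) i i
    simp only [mul_apply, star_apply, Complex.star_def, Complex.mul_conj, one_apply_eq] at h
    exact_mod_cast h
  have hcol : ∀ j, ∑ i, Complex.normSq (W i j) = 1 := fun j => by
    have h := congr_fun₂ (mem_unitaryGroup_iff'.mp hW) j j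
    simp only [mul_apply, star_apply, Complex.star_def, ← Complex.normSq_eq_conj_mul_self,
      one_apply_eq] at h
    exact_mod_cast h
  exact mem_doublyStochastic_iff_sum.mpr ⟨fun i j => Complex.normSq_nonneg _, hrow, hcol⟩

namespace IsHermitian

/-- `hA.overlap hB i j = |⟨uᵢ, vⱼ⟩|²` for the eigenvectors `uᵢ` of `A` and `vⱼ` of `B`. -/
noncomputable def overlap {A B : Matrix n n ℂ} (hA : A.IsHermitian) (hB : B.IsHermitian) :
    Matrix n n ℝ :=
  (star (hA.eigenvectorUnitary : Matrix n n ℂ) * hB.eigenvectorUnitary).map Complex.normSq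

variable {A B : Matrix n n ℂ} (hA : A.IsHermitian) (hB : B.IsHermitian)

lemma overlap_mem_doublyStochastic : hA.overlap hB ∈ doublyStochastic ℝ n :=
  map_normSq_mem_doublyStochastic (star hA.eigenvectorUnitary * hB.eigenvectorUnitary).2

lemma overlap_self : hA.overlap hA = 1 := by
  ext i j
  rw [overlap, Unitary.coe_star_mul_self, map_apply, one_apply, one_apply]
  split_ifs <;> simp

lemma cfc_eq_mul_diagonal_mul (f : ℝ → ℝ) :
    hA.cfc f = (hA.eigenvectorUnitary : Matrix n n ℂ) *
      diagonal (RCLike.ofReal ∘ f ∘ hA.eigenvalues) * star (hA.eigenvectorUnitary : Matrix n n ℂ) :=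
  Unitary.conjStarAlgAut_apply ..

lemma cfc_id_eq : hA.cfc id = A := by
  rw [← cfc_eq, cfc_id ℝ A hA.isSelfAdjoint]

lemma trace_cfc (f : ℝ → ℝ) : (hA.cfc f).trace = ∑ i, (f (hA.eigenvalues i) : ℂ) := by
  rw [cfc_eq_mul_diagonal_mul, trace_mul_cycle, Unitary.coe_star_mul_self, one_mul, trace_diagonal]
  rfl

lemma diag_star_mul_cfc_mul (f : ℝ → ℝ) (j : n) :
    (star (hB.eigenvectorUnitary : Matrix n n ℂ) * hA.cfc f *
      (hB.eigenvectorUnitary : Matrix n n ℂ)) j j =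
      ((∑ i, f (hA.eigenvalues i) * hA.overlap hB i j : ℝ) : ℂ) := by
  set W := star (hA.eigenvectorUnitary : Matrix n n ℂ) * hB.eigenvectorUnitary
  have hconj : star (hB.eigenvectorUnitary : Matrix n n ℂ) * hA.cfc f *
      (hB.eigenvectorUnitary : Matrix n n ℂ) =
      star W * diagonal (RCLike.ofReal ∘ f ∘ hA.eigenvalues) * W := by
    simp only [W, cfc_eq_mul_diagonal_mul, star_mul, star_star, mul_assoc]
  rw [hconj, mul_apply, Complex.ofReal_sum]
  refine sum_congr rfl fun i _ => ?_
  rw [mul_diagonal, star_apply, overlap, map_apply, Complex.star_def, Function.comp_apply,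
    Function.comp_apply, mul_right_comm, ← Complex.normSq_eq_conj_mul_self]
  push_cast
  exact mul_comm _ _

lemma trace_cfc_mul_cfc (f g : ℝ → ℝ) :
    (hA.cfc f * hB.cfc g).trace =
      ((∑ i, ∑ j, f (hA.eigenvalues i) * g (hB.eigenvalues j) * hA.overlap hB i j : ℝ) : ℂ) := by
  rw [cfc_eq_mul_diagonal_mul hB, ← mul_assoc, ← mul_assoc, trace_mul_cycle, ← mul_assoc, trace]
  simp only [diag_apply, mul_diagonal, diag_star_mul_cfc_mul, Function.comp_apply]
  push_cast
  rw [sum_comm]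
  simp only [sum_mul]
  exact sum_congr rfl fun j _ => sum_congr rfl fun i _ => mul_right_comm _ _ _

lemma diag_star_mul_mul (j : n) :
    (star (hB.eigenvectorUnitary : Matrix n n ℂ) * A * (hB.eigenvectorUnitary : Matrix n n ℂ)) j j =
      ((∑ i, hA.eigenvalues i * hA.overlap hB i j : ℝ) : ℂ) := by
  simpa only [hA.cfc_id_eq, id] using hA.diag_star_mul_cfc_mul hB id j

lemma sum_eigenvalues_eq_one (hA1 : A.trace = 1) : ∑ i, hA.eigenvalues i = 1 :=
  Complex.ofReal_eq_one.mp (by push_cast; exact hA.trace_eq_sum_eigenvalues.symm.trans hA1)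

end IsHermitian

lemma PosSemidef.eigenvalues_mul_overlap_eq_zero {A B : Matrix n n ℂ} (hA : A.PosSemidef)
    (hB : B.IsHermitian) (hker : ∀ v, B *ᵥ v = 0 → A *ᵥ v = 0) {j : n}
    (hj : hB.eigenvalues j = 0) (i : n) :
    hA.1.eigenvalues i * hA.1.overlap hB i j = 0 := by
  have hAv : A *ᵥ ⇑(hB.eigenvectorBasis j) = 0 :=
    hker _ (by rw [hB.mulVec_eigenvectorBasis, hj, zero_smul])
  have hdiag : (star (hB.eigenvectorUnitary : Matrix n n ℂ) * A *
      (hB.eigenvectorUnitary : Matrix n n ℂ)) j j = 0 := by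
    rw [mul_assoc, mul_apply]
    refine sum_eq_zero fun k _ => ?_
    have hcol : (A * hB.eigenvectorUnitary) k j = (A *ᵥ ⇑(hB.eigenvectorBasis j)) k := rfl
    rw [hcol, hAv, Pi.zero_apply, mul_zero]
  rw [hA.1.diag_star_mul_mul hB, Complex.ofReal_eq_zero] at hdiag
  exact (sum_eq_zero_iff_of_nonneg fun i _ => mul_nonneg (hA.eigenvalues_nonneg i)
    (nonneg_of_mem_doublyStochastic (hA.1.overlap_mem_doublyStochastic hB))).mp hdiag i
    (mem_univ i)

lemma re_trace_le_traceNorm (M : Matrix n n ℂ) : M.trace.re ≤ traceNorm M := by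
  set hH := (posSemidef_conjTranspose_mul_self M).1
  set V := (hH.eigenvectorUnitary : Matrix n n ℂ)
  have hV : V * star V = 1 := Unitary.mul_star_self_of_mem hH.eigenvectorUnitary.2
  set N := star V * M * V
  have htrace : M.trace = N.trace := by
    rw [trace_mul_cycle, hV, one_mul]
  have hdiag : ∀ i, ((Nᴴ * N) i i).re = hH.eigenvalues i := fun i => by
    have hNN : Nᴴ * N = star V * (Mᴴ * M) * V := by
      simp only [N, ← star_eq_conjTranspose, star_mul, star_star, mul_assoc]
      rw [← mul_assoc V (star V), hV, one_mul]
    rw [hNN, hH.diag_star_mul_mul hH, hH.overlap_self, Complex.ofReal_re]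
    simp [one_apply]
  have htraceNorm : traceNorm M = ∑ i, √(hH.eigenvalues i) := by
    rw [traceNorm, show (posSemidef_conjTranspose_mul_self M).sqrt = hH.cfc sqrt from rfl,
      hH.trace_cfc, ← Complex.ofReal_sum, Complex.ofReal_re]
  rw [htrace, htraceNorm, trace, Complex.re_sum]
  exact sum_le_sum fun i _ =>
    (re_apply_le_sqrt_re_conjTranspose_mul_self_apply N i).trans_eq (by rw [hdiag])

end Matrix

lemma Real.two_mul_sub_sqrt_mul_sqrt_le_mul_log_sub {p q : ℝ} (hp : 0 ≤ p) (hq : 0 ≤ q)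
    (hpq : q = 0 → p = 0) : 2 * (p - √p * √q) ≤ p * (log p - log q) := by
  rcases hp.eq_or_lt with rfl | hp'
  · simp
  have hq' : 0 < q := hq.lt_of_ne' fun h => hp'.ne' (hpq h)
  have hx : 0 < √p := sqrt_pos.2 hp'
  have hy : 0 < √q := sqrt_pos.2 hq'
  have hlog : log (√q / √p) ≤ √q / √p - 1 := log_le_sub_one_of_pos (div_pos hy hx)
  rw [log_div hy.ne' hx.ne', log_sqrt hq, log_sqrt hp] at hlog
  have hpx : p * (√q / √p) = √p * √q := by
    rw [mul_div_assoc', div_eq_iff hx.ne', mul_right_comm, mul_self_sqrt hp]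
  nlinarith [mul_le_mul_of_nonneg_left hlog hp'.le]

section Stochastic

variable {n : Type*} [Fintype n] [DecidableEq n] {p q : n → ℝ} {c : Matrix n n ℝ}

lemma two_mul_one_sub_sum_sqrt_mul_sqrt_le_sum_mul_log_sub (hp : ∀ i, 0 ≤ p i)
    (hq : ∀ j, 0 ≤ q j) (hp1 : ∑ i, p i = 1) (hc : c ∈ rowStochastic ℝ n)
    (hsupp : ∀ i j, q j = 0 → p i * c i j = 0) :
    2 * (1 - ∑ i, ∑ j, √(p i) * √(q j) * c i j) ≤
      ∑ i, ∑ j, p i * (log (p i) - log (q j)) * c i j := by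
  have hpc : ∑ i, ∑ j, p i * c i j = 1 := by
    simp only [← mul_sum, sum_row_of_mem_rowStochastic hc, mul_one, hp1]
  calc 2 * (1 - ∑ i, ∑ j, √(p i) * √(q j) * c i j)
      = ∑ i, ∑ j, 2 * (p i - √(p i) * √(q j)) * c i j := by
        simp only [← hpc, mul_sum, ← sum_sub_distrib]
        exact sum_congr rfl fun i _ => sum_congr rfl fun j _ => by ring
    _ ≤ ∑ i, ∑ j, p i * (log (p i) - log (q j)) * c i j := by
        refine sum_le_sum fun i _ => sum_le_sum fun j _ => ?_
        rcases (nonneg_of_mem_rowStochastic hc (i := i) (j := j)).eq_or_lt with h | h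
        · simp [← h]
        refine mul_le_mul_of_nonneg_right
          (two_mul_sub_sqrt_mul_sqrt_le_mul_log_sub (hp i) (hq j) fun hq0 => ?_) h.le
        exact (mul_eq_zero.mp (hsupp i j hq0)).resolve_right h.ne'

lemma sum_sqrt_mul_sqrt_mul_le_one (hp : ∀ i, 0 ≤ p i) (hq : ∀ j, 0 ≤ q j)
    (hp1 : ∑ i, p i = 1) (hq1 : ∑ j, q j = 1) (hc : c ∈ doublyStochastic ℝ n) :
    ∑ i, ∑ j, √(p i) * √(q j) * c i j ≤ 1 :=
  calc ∑ i, ∑ j, √(p i) * √(q j) * c i j ≤ ∑ i, ∑ j, (p i + q j) / 2 * c i j := by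
        refine sum_le_sum fun i _ => sum_le_sum fun j _ =>
          mul_le_mul_of_nonneg_right ?_ (nonneg_of_mem_doublyStochastic hc)
        nlinarith [sq_nonneg (√(p i) - √(q j)), sq_sqrt (hp i), sq_sqrt (hq j)]
    _ = (∑ i, ∑ j, p i * c i j + ∑ i, ∑ j, q j * c i j) / 2 := by
        simp only [sum_div, ← sum_add_distrib]
        exact sum_congr rfl fun i _ => sum_congr rfl fun j _ => by ring
    _ = (∑ i, p i * ∑ j, c i j + ∑ j, q j * ∑ i, c i j) / 2 := by
        rw [sum_comm (f := fun i j => q j * c i j)]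
        simp only [mul_sum]
    _ = 1 := by
        simp only [sum_row_of_mem_doublyStochastic hc,
          sum_col_of_mem_doublyStochastic hc, mul_one, hp1, hq1]
        norm_num

end Stochastic

section QuantumStates

variable {n : Type*} [Fintype n] [DecidableEq n] {ρ σ : Matrix n n ℂ}

lemma sum_sqrt_mul_sqrt_mul_overlap_le_fidelity (hρ : ρ.PosSemidef) (hσ : σ.PosSemidef) :
    ∑ i, ∑ j, √(hρ.1.eigenvalues i) * √(hσ.1.eigenvalues j) * hρ.1.overlap hσ.1 i j ≤
      fidelity ρ σ := by
  rw [fidelity, dif_pos ⟨hρ, hσ⟩]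
  have h := re_trace_le_traceNorm (hρ.sqrt * hσ.sqrt)
  rwa [show hρ.sqrt = hρ.1.cfc sqrt from rfl, show hσ.sqrt = hσ.1.cfc sqrt from rfl,
    IsHermitian.trace_cfc_mul_cfc, Complex.ofReal_re] at h

lemma matLog2_eq_cfc (hρ : ρ.IsHermitian) : matLog2 ρ = hρ.cfc (logb 2) := by
  rw [matLog2, dif_pos hρ]

lemma log_two_mul_re_trace_mul_matLog2_sub (hρ : ρ.IsHermitian) (hσ : σ.IsHermitian) :
    log 2 * (ρ * (matLog2 ρ - matLog2 σ)).trace.re =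
      ∑ i, ∑ j, hρ.eigenvalues i * (log (hρ.eigenvalues i) - log (hσ.eigenvalues j)) *
        hρ.overlap hσ i j := by
  set p := hρ.eigenvalues
  set q := hσ.eigenvalues
  set c := hρ.overlap hσ
  have hlog : ∀ x, log 2 * logb 2 x = log x := fun x =>
    mul_div_cancel₀ _ (log_pos one_lt_two).ne'
  have hρρ : (ρ * matLog2 ρ).trace = ((∑ i, ∑ j, p i * logb 2 (p i) * c i j : ℝ) : ℂ) := by
    have h := hρ.trace_cfc_mul_cfc hρ id (logb 2)
    simp only [hρ.cfc_id_eq, hρ.overlap_self, id, one_apply, mul_ite, mul_one, mul_zero,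
      sum_ite_eq, mem_univ, if_true] at h
    rw [matLog2_eq_cfc hρ, h]
    congr 1
    refine sum_congr rfl fun i _ => ?_
    rw [← mul_sum, sum_row_of_mem_doublyStochastic (hρ.overlap_mem_doublyStochastic hσ),
      mul_one]
  have hρσ : (ρ * matLog2 σ).trace = ((∑ i, ∑ j, p i * logb 2 (q j) * c i j : ℝ) : ℂ) := by
    have h := hρ.trace_cfc_mul_cfc hσ id (logb 2)
    simp only [hρ.cfc_id_eq, id] at h
    rw [matLog2_eq_cfc hσ, h]
  rw [mul_sub, trace_sub, Complex.sub_re, hρρ, hρσ, Complex.ofReal_re, Complex.ofReal_re,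
    mul_sub, mul_sum, mul_sum, ← sum_sub_distrib]
  refine sum_congr rfl fun i _ => ?_
  rw [mul_sum, mul_sum, ← sum_sub_distrib]
  refine sum_congr rfl fun j _ => ?_
  rw [← hlog (p i), ← hlog (q j)]
  ring

end QuantumStates

/-- Pinsker's inequality, Bures form: for any two quantum states
`ρ`, `σ`, `B(ρ,σ)² ≤ ln 2 · D(ρ‖σ)`. -/
theorem bures_pinsker {n : Type*} [Fintype n] [DecidableEq n]
    (ρ σ : Matrix n n ℂ)
    (hρ : ρ.PosSemidef) (hρ1 : ρ.trace = 1)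
    (hσ : σ.PosSemidef) (hσ1 : σ.trace = 1) :
    ((bures ρ σ ^ 2 : ℝ) : EReal) ≤ ((Real.log 2 : ℝ) : EReal) * relEntE ρ σ := by
  by_cases hsupp : ∀ v : n → ℂ, σ.mulVec v = 0 → ρ.mulVec v = 0
  case neg =>
    rw [relEntE, if_neg hsupp, EReal.coe_mul_top_of_pos (log_pos one_lt_two)]
    exact le_top
  rw [relEntE, if_pos hsupp, ← EReal.coe_mul, EReal.coe_le_coe_iff,
    log_two_mul_re_trace_mul_matLog2_sub hρ.1 hσ.1]
  have hc := hρ.1.overlap_mem_doublyStochastic hσ.1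
  have hp1 := hρ.1.sum_eigenvalues_eq_one hρ1
  have hq1 := hσ.1.sum_eigenvalues_eq_one hσ1
  have hTF := sum_sqrt_mul_sqrt_mul_overlap_le_fidelity hρ hσ
  have hT1 := sum_sqrt_mul_sqrt_mul_le_one hρ.eigenvalues_nonneg hσ.eigenvalues_nonneg hp1 hq1 hc
  have hKL := two_mul_one_sub_sum_sqrt_mul_sqrt_le_sum_mul_log_sub hρ.eigenvalues_nonneg
    hσ.eigenvalues_nonneg hp1
    (mem_doublyStochastic_iff_mem_rowStochastic_and_mem_colStochastic.mp hc).1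
    fun i j hq => hρ.eigenvalues_mul_overlap_eq_zero hσ.1 hsupp hq i
  set T := ∑ i, ∑ j, √(hρ.1.eigenvalues i) * √(hσ.1.eigenvalues j) * hρ.1.overlap hσ.1 i j
  calc bures ρ σ ^ 2 ≤ √(1 - T) ^ 2 :=
        pow_le_pow_left₀ (sqrt_nonneg _) (sqrt_le_sqrt (by linarith)) 2
    _ = 1 - T := sq_sqrt (by linarith)
    _ ≤ 2 * (1 - T) := by linarith
    _ ≤ _ := hKL
end
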